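/- arXiv:0906.3876 — 3 statements merged into one kernel-verified Lean document; each statement's English description precedes it below -/
import Mathlib

section
/- If $X$ and $Y$ are independent nonnegative random variables, $X$ has a subexponential tail, and $Y$ has a lighter tail than $X$ (i.e. $\mathbb{P}(Y > t)/\mathbb{P}(X > t) \to 0$), then $X + Y$ is subexponential and $\mathbb{P}(X + Y > t) \sim \mathbb{P}(X > t)$ as $t \to \infty$. -/
open MeasureTheory ProbabilityTheory Filter

/-- The tail of the `n`-fold convolution of `ν`:
`P(X₁ + ⋯ + Xₙ > t)` for `X₁, …, Xₙ` i.i.d. with law `ν`. -/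
noncomputable def convTail (ν : Measure ℝ) (n : ℕ) (t : ℝ) : ℝ :=
  ((Measure.pi fun _ : Fin n => ν) {x | t < ∑ i, x i}).toReal

/-- A law `ν` on `ℝ` is subexponential if `P(X₁+⋯+Xₙ > t) / P(X₁ > t) → n` for all `n ≥ 1`. -/
def Subexponential (ν : Measure ℝ) : Prop :=
  ∀ n : ℕ, 1 ≤ n →
    Tendsto (fun t => convTail ν n t / (ν (Set.Ioi t)).toReal) atTop (nhds (n : ℝ))

/-! Write `F̄` for the tail of `X`. Subexponentiality at `n = 2` reads
`P(X₁ + X₂ > t) = 2 F̄(t) + o(F̄(t))`, which forces `F̄(t - A) = F̄(t) + o(F̄(t))` for every fixed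
`A` (long tails). Let `S, T ≥ 0` be independent with tails `a F̄ + o(F̄)` and `b F̄ + o(F̄)`. Then
`P(S + T > t) = ∫_{y ≤ t} P(S > t - y) dP_T(y) + P(T > t)`; replacing `P(S > t - y)` by
`a F̄(t - y)` costs `o(F̄(t))`, off the window `(t - A, t]` by the choice of `A` and on it because
its `P_T`-mass is `o(F̄(t))` by long tails. Doing this first for `(S, T) = (T, X)`, where the
value for `X + X` is known, evaluates `∫_{y ≤ t} F̄(t - y) dP_T(y) = F̄(t) + o(F̄(t))`; hence tails
add: `S + T` has tail `(a + b) F̄ + o(F̄)`. Taking `(a, b) = (1, 0)` gives `P(X + Y > t) ~ F̄(t)`,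
and induction gives tail `n F̄ + o(F̄)` for the `n`-fold convolution of the law of `X + Y`. -/

open Set Asymptotics Topology

noncomputable def tail (σ : Measure ℝ) (t : ℝ) : ℝ := σ.real (Ioi t)

section Tail

variable {σ τ : Measure ℝ}

lemma tail_nonneg (t : ℝ) : 0 ≤ tail σ t := measureReal_nonneg

lemma tail_antitone [IsFiniteMeasure σ] : Antitone (tail σ) :=
  fun _ _ hst => measureReal_mono (Ioi_subset_Ioi hst)

lemma tail_le_one [IsProbabilityMeasure σ] (t : ℝ) : tail σ t ≤ 1 := measureReal_le_one

lemma measurable_tail_comp_sub [IsFiniteMeasure σ] (t : ℝ) :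
    Measurable fun y => tail σ (t - y) :=
  tail_antitone.measurable.comp (measurable_const.sub measurable_id)

lemma integrable_tail_comp_sub [IsProbabilityMeasure σ] [IsFiniteMeasure τ] (t : ℝ) :
    Integrable (fun y => tail σ (t - y)) τ :=
  .of_bound (measurable_tail_comp_sub t).aestronglyMeasurable 1 <| .of_forall fun y => by
    rw [Real.norm_of_nonneg (tail_nonneg _)]; exact tail_le_one _

lemma tail_of_neg [IsProbabilityMeasure σ] (hσ : σ (Iio 0) = 0) {t : ℝ} (ht : t < 0) :
    tail σ t = 1 := by
  refine le_antisymm (tail_le_one t) ?_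
  calc 1 = σ.real (Ici 0) := by
        rw [← compl_Iio, probReal_compl_eq_one_sub measurableSet_Iio, measureReal_def, hσ]; simp
    _ ≤ tail σ t := measureReal_mono fun x hx => ht.trans_le hx

lemma tail_sub_tail [IsFiniteMeasure σ] {s t : ℝ} (hst : s ≤ t) :
    tail σ s - tail σ t = σ.real (Ioc s t) := by
  rw [tail, tail, ← Ioi_sdiff_Ioi, measureReal_sdiff (Ioi_subset_Ioi hst) measurableSet_Ioi]

lemma tendsto_tail_atTop [IsFiniteMeasure σ] : Tendsto (tail σ) atTop (𝓝 0) := by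
  have hempty : (⋂ t : ℝ, Ioi t) = ∅ := iInter_eq_empty_iff.2 fun x => ⟨x, lt_irrefl x⟩
  have h := tendsto_measure_iInter_atTop (μ := σ) (fun t : ℝ => measurableSet_Ioi.nullMeasurableSet)
    (fun _ _ hst => Ioi_subset_Ioi hst) ⟨0, measure_ne_top σ _⟩
  rw [hempty, measure_empty] at h
  exact (ENNReal.tendsto_toReal ENNReal.zero_ne_top).comp h

lemma tail_conv [IsFiniteMeasure σ] [IsFiniteMeasure τ] (t : ℝ) :
    tail (σ ∗ τ) t = ∫ y, tail σ (t - y) ∂τ := by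
  set S := (fun p : ℝ × ℝ => p.1 + p.2) ⁻¹' Ioi t
  have hset : MeasurableSet S := measurableSet_Ioi.preimage (by fun_prop)
  have hsec (y : ℝ) : (fun x => (x, y)) ⁻¹' S = Ioi (t - y) := by
    ext x; simp [S, sub_lt_iff_lt_add]
  rw [tail, measureReal_def, Measure.conv, Measure.map_apply (by fun_prop) measurableSet_Ioi]
  have hmono : Monotone fun y => σ (Ioi (t - y)) :=
    fun _ _ hyz => measure_mono (Ioi_subset_Ioi (by linarith))
  rw [Measure.prod_apply_symm hset]
  simp_rw [hsec]
  rw [← integral_toReal hmono.measurable.aemeasurable (.of_forall fun _ => measure_lt_top _ _)]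
  rfl

lemma tail_conv_eq_setIntegral_add [IsProbabilityMeasure σ] [IsFiniteMeasure τ]
    (hσ : σ (Iio 0) = 0) (t : ℝ) :
    tail (σ ∗ τ) t = ∫ y in Iic t, tail σ (t - y) ∂τ + tail τ t := by
  rw [tail_conv, ← integral_add_compl measurableSet_Iic (integrable_tail_comp_sub t), compl_Iic,
    setIntegral_congr_fun measurableSet_Ioi fun y hy => tail_of_neg hσ (sub_neg.2 hy),
    setIntegral_const, smul_eq_mul, mul_one]
  rfl

lemma conv_Iio_zero [SFinite σ] [SFinite τ] (hσ : σ (Iio 0) = 0) (hτ : τ (Iio 0) = 0) :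
    (σ ∗ τ) (Iio 0) = 0 := by
  rw [Measure.conv, Measure.map_apply (by fun_prop) measurableSet_Iio]
  refine measure_mono_null (t := Iio 0 ×ˢ univ ∪ univ ×ˢ Iio 0) ?_ ?_
  · rintro ⟨x, y⟩ (h : x + y < 0)
    by_contra! hc
    simp only [mem_union, mem_prod, mem_Iio, mem_univ, and_true, true_and, not_or, not_lt] at hc
    linarith
  · simp [Measure.prod_prod, hσ, hτ]

end Tail

noncomputable def convPow (σ : Measure ℝ) (n : ℕ) : Measure ℝ :=
  (Measure.pi fun _ : Fin n => σ).map fun x => ∑ i, x i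

lemma convTail_eq_tail_convPow (σ : Measure ℝ) (n : ℕ) (t : ℝ) :
    convTail σ n t = tail (convPow σ n) t := by
  rw [tail, measureReal_def, convPow, Measure.map_apply (by fun_prop) measurableSet_Ioi]
  rfl

lemma subexponential_iff {σ : Measure ℝ} : Subexponential σ ↔
    ∀ n : ℕ, 1 ≤ n → Tendsto (fun t => tail (convPow σ n) t / tail σ t) atTop (𝓝 n) := by
  simp only [Subexponential, convTail_eq_tail_convPow]
  rfl

section ConvPow

variable {σ : Measure ℝ} [IsProbabilityMeasure σ]

instance (n : ℕ) : IsProbabilityMeasure (convPow σ n) :=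
  Measure.isProbabilityMeasure_map (by fun_prop)

lemma convPow_zero : convPow σ 0 = Measure.dirac 0 := by
  simp [convPow]

lemma convPow_succ (n : ℕ) : convPow σ (n + 1) = σ ∗ convPow σ n := by
  have e := (measurePreserving_piFinSuccAbove (fun _ : Fin (n + 1) => σ) 0).symm
  rw [convPow, ← e.map_eq, Measure.map_map (by fun_prop) e.measurable, Measure.conv, convPow,
    ← Measure.map_id (μ := σ), Measure.map_prod_map _ _ measurable_id (by fun_prop),
    Measure.map_map (by fun_prop) (by fun_prop), Measure.map_id]
  congr 1 with x
  simp [Fin.sum_univ_succ, MeasurableEquiv.piFinSuccAbove_symm_apply]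

lemma convPow_one : convPow σ 1 = σ := by
  rw [convPow_succ, convPow_zero, Measure.conv_dirac_zero]

lemma convPow_Iio_zero (hσ : σ (Iio 0) = 0) (n : ℕ) : convPow σ n (Iio 0) = 0 := by
  induction n with
  | zero => simp [convPow_zero]
  | succ n ih => rw [convPow_succ]; exact conv_Iio_zero hσ ih

end ConvPow

lemma isLittleO_sub_mul_iff_tendsto_div {x f : ℝ → ℝ} {a : ℝ} (hf : ∀ t, f t ≠ 0) :
    (fun t => x t - a * f t) =o[atTop] f ↔ Tendsto (fun t => x t / f t) atTop (𝓝 a) := by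
  rw [isLittleO_iff_tendsto fun t h => absurd h (hf t), ← tendsto_sub_nhds_zero_iff (x := a)]
  refine tendsto_congr fun t => ?_
  rw [sub_div, mul_div_cancel_right₀ _ (hf t)]

lemma tendsto_div_of_isLittleO {x y f : ℝ → ℝ} {a b : ℝ} (hf : ∀ t, f t ≠ 0) (hb : b ≠ 0)
    (hx : (fun t => x t - a * f t) =o[atTop] f) (hy : (fun t => y t - b * f t) =o[atTop] f) :
    Tendsto (fun t => x t / y t) atTop (𝓝 (a / b)) :=
  (((isLittleO_sub_mul_iff_tendsto_div hf).1 hx).div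
    ((isLittleO_sub_mul_iff_tendsto_div hf).1 hy) hb).congr fun t =>
      div_div_div_cancel_right₀ (hf t) _ _

lemma isLittleO_comp_sub_sub {f g : ℝ → ℝ} {b A : ℝ}
    (hf : (fun t => f (t - A) - f t) =o[atTop] f) (hg : (fun t => g t - b * f t) =o[atTop] f) :
    (fun t => g (t - A) - g t) =o[atTop] f := by
  have hshift : Tendsto (fun t => t - A) atTop atTop :=
    tendsto_atTop_add_const_right _ (-A) tendsto_id
  have hfA : (fun t => f (t - A)) =O[atTop] f :=
    (hf.isBigO.add (isBigO_refl f _)).congr_left fun t => sub_add_cancel _ _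
  refine (((hg.comp_tendsto hshift).trans_isBigO hfA).sub hg |>.add
    (hf.const_mul_left b)).congr_left fun t => ?_
  simp only [Function.comp]
  ring

section LongTail

variable {ν : Measure ℝ} [IsProbabilityMeasure ν]

lemma tail_sub_mul_le (hν : ν (Iio 0) = 0) {A t : ℝ} (hAt : A ≤ t) :
    (tail ν (t - A) - tail ν t) * (tail ν A - tail ν t) ≤
      tail (ν ∗ ν) t - 2 * tail ν t + tail ν t ^ 2 := by
  set D := tail ν (t - A) - tail ν t
  have hle : ∀ᵐ y ∂ν, tail ν t + (Ioi A).indicator (fun _ => D) y +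
      (Ioi t).indicator (fun _ => 1 - tail ν (t - A)) y ≤ tail ν (t - y) := by
    filter_upwards [measure_eq_zero_iff_ae_notMem.1 hν] with y hy
    rw [mem_Iio, not_lt] at hy
    rcases le_or_gt y A with hyA | hyA
    · rw [indicator_of_notMem (notMem_Ioi.2 hyA),
        indicator_of_notMem (notMem_Ioi.2 (hyA.trans hAt))]
      simpa using tail_antitone (by linarith : t - y ≤ t)
    rcases le_or_gt y t with hyt | hyt
    · rw [indicator_of_mem (mem_Ioi.2 hyA), indicator_of_notMem (notMem_Ioi.2 hyt)]
      simpa [D] using tail_antitone (by linarith : t - y ≤ t - A)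
    · rw [indicator_of_mem (mem_Ioi.2 hyA), indicator_of_mem (mem_Ioi.2 hyt),
        tail_of_neg hν (t := t - y) (by linarith)]
      simp [D]
  have hint : Integrable (fun y => tail ν t + (Ioi A).indicator (fun _ => D) y +
      (Ioi t).indicator (fun _ => 1 - tail ν (t - A)) y) ν :=
    ((integrable_const _).add ((integrable_const _).indicator measurableSet_Ioi)).add
      ((integrable_const _).indicator measurableSet_Ioi)
  have h := integral_mono_ae hint (integrable_tail_comp_sub t) hle
  rw [integral_add ((integrable_const _).add ((integrable_const _).indicator measurableSet_Ioi))
      ((integrable_const _).indicator measurableSet_Ioi),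
    integral_add (integrable_const _) ((integrable_const _).indicator measurableSet_Ioi),
    integral_const, integral_indicator_const _ measurableSet_Ioi,
    integral_indicator_const _ measurableSet_Ioi, ← tail_conv] at h
  simp only [probReal_univ, smul_eq_mul, one_mul] at h
  change tail ν t + tail ν A * D + tail ν t * (1 - tail ν (t - A)) ≤ _ at h
  linear_combination h

/-- A subexponential law is long-tailed. -/
lemma isLittleO_tail_sub_tail (hν : ν (Iio 0) = 0) (hpos : ∀ t, 0 < tail ν t)
    (h2 : (fun t => tail (ν ∗ ν) t - 2 * tail ν t) =o[atTop] tail ν) {A : ℝ} (hA : 0 ≤ A) :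
    (fun t => tail ν (t - A) - tail ν t) =o[atTop] tail ν := by
  have hsq : (fun t => tail ν t ^ 2) =o[atTop] tail ν := by
    simpa [sq] using
      ((isLittleO_one_iff ℝ).2 tendsto_tail_atTop).mul_isBigO (isBigO_refl (tail ν) _)
  refine IsBigO.trans_isLittleO (.of_bound (2 / tail ν A) ?_) (h2.add hsq)
  filter_upwards [eventually_ge_atTop A,
    (tendsto_tail_atTop (σ := ν)).eventually (gt_mem_nhds (half_pos (hpos A)))] with t hAt hsmall
  have hD : 0 ≤ tail ν (t - A) - tail ν t := sub_nonneg.2 (tail_antitone (by linarith))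
  have h := tail_sub_mul_le hν hAt
  rw [Real.norm_of_nonneg hD, Real.norm_eq_abs, div_mul_eq_mul_div, le_div_iff₀ (hpos A)]
  nlinarith [le_abs_self (tail (ν ∗ ν) t - 2 * tail ν t + tail ν t ^ 2),
    mul_le_mul_of_nonneg_left hsmall.le hD]

end LongTail

section TailEquivalence

variable {ν : Measure ℝ} [IsProbabilityMeasure ν]

lemma isLittleO_setIntegral_comp_sub {τ : Measure ℝ} [IsFiniteMeasure τ] {φ : ℝ → ℝ} {M : ℝ}
    (hφm : Measurable φ) (hM : ∀ s, |φ s| ≤ M) (hφ : φ =o[atTop] tail ν)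
    (hwin : ∀ A, 0 ≤ A → (fun t => τ.real (Ioc (t - A) t)) =o[atTop] tail ν)
    (hI : (fun t => ∫ y in Iic t, tail ν (t - y) ∂τ) =O[atTop] tail ν) :
    (fun t => ∫ y in Iic t, φ (t - y) ∂τ) =o[atTop] tail ν := by
  obtain ⟨C, hC, hIC⟩ := hI.exists_pos
  refine isLittleO_iff.2 fun ε hε => ?_
  obtain ⟨A₀, hA₀⟩ := eventually_atTop.1 (hφ.def (div_pos hε (mul_pos two_pos hC)))
  set A := max A₀ 0
  filter_upwards [hIC.bound, ((hwin A (le_max_right _ _)).const_mul_left M).def (half_pos hε)]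
    with t hIt hwt
  have hφint : Integrable (fun y => φ (t - y)) τ :=
    .of_bound (hφm.comp (measurable_const.sub measurable_id)).aestronglyMeasurable M
      (.of_forall fun y => hM (t - y))
  have hsplit : ∫ y in Iic t, φ (t - y) ∂τ =
      ∫ y in Iic (t - A), φ (t - y) ∂τ + ∫ y in Ioc (t - A) t, φ (t - y) ∂τ := by
    rw [← setIntegral_union (Iic_disjoint_Ioc le_rfl) measurableSet_Ioc hφint.integrableOn
      hφint.integrableOn, Iic_union_Ioc_eq_Iic (by linarith [le_max_right A₀ 0])]
  have hfar : ‖∫ y in Iic (t - A), φ (t - y) ∂τ‖ ≤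
      ε / (2 * C) * ∫ y in Iic t, tail ν (t - y) ∂τ :=
    calc ‖∫ y in Iic (t - A), φ (t - y) ∂τ‖
        ≤ ∫ y in Iic (t - A), ε / (2 * C) * tail ν (t - y) ∂τ := by
          refine norm_integral_le_of_norm_le ((integrable_tail_comp_sub t).const_mul _).integrableOn
            (ae_restrict_of_forall_mem measurableSet_Iic fun y hy => ?_)
          simpa [Real.norm_of_nonneg (tail_nonneg _)] using
            hA₀ (t - y) (by linarith [le_max_left A₀ 0, mem_Iic.1 hy])
      _ ≤ ε / (2 * C) * ∫ y in Iic t, tail ν (t - y) ∂τ := by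
          rw [integral_const_mul]
          refine mul_le_mul_of_nonneg_left (setIntegral_mono_set
            (integrable_tail_comp_sub t).integrableOn (.of_forall fun _ => tail_nonneg _)
            (Iic_subset_Iic.2 (by linarith [le_max_right A₀ 0])).eventuallyLE) (by positivity)
  have hnear : ‖∫ y in Ioc (t - A) t, φ (t - y) ∂τ‖ ≤ M * τ.real (Ioc (t - A) t) :=
    norm_setIntegral_le_of_norm_le_const (measure_lt_top _ _) fun y _ => hM (t - y)
  calc ‖∫ y in Iic t, φ (t - y) ∂τ‖
      ≤ ε / (2 * C) * ‖∫ y in Iic t, tail ν (t - y) ∂τ‖ + ‖M * τ.real (Ioc (t - A) t)‖ := by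
        rw [hsplit]
        refine (norm_add_le _ _).trans (add_le_add (hfar.trans ?_) (hnear.trans (le_abs_self _)))
        exact mul_le_mul_of_nonneg_left (le_abs_self _) (by positivity)
    _ ≤ ε / (2 * C) * (C * ‖tail ν t‖) + ε / 2 * ‖tail ν t‖ :=
        add_le_add (mul_le_mul_of_nonneg_left hIt (by positivity)) hwt
    _ = ε * ‖tail ν t‖ := by field_simp; ring

lemma isLittleO_tail_conv_of_tail_self_conv (hν : ν (Iio 0) = 0)
    (hlong : ∀ A, 0 ≤ A → (fun t => tail ν (t - A) - tail ν t) =o[atTop] tail ν)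
    {σ τ : Measure ℝ} [IsProbabilityMeasure σ] [IsProbabilityMeasure τ] (hσ0 : σ (Iio 0) = 0)
    {a b : ℝ} (hσ : (fun t => tail σ t - a * tail ν t) =o[atTop] tail ν)
    (hτ : (fun t => tail τ t - b * tail ν t) =o[atTop] tail ν)
    (hντ : (fun t => tail (ν ∗ τ) t - (1 + b) * tail ν t) =o[atTop] tail ν) :
    (fun t => tail (σ ∗ τ) t - (a + b) * tail ν t) =o[atTop] tail ν := by
  have hI : (fun t => ∫ y in Iic t, tail ν (t - y) ∂τ - tail ν t) =o[atTop] tail ν :=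
    (hντ.sub hτ).congr_left fun t => by rw [tail_conv_eq_setIntegral_add hν]; ring
  have hwin (A : ℝ) (hA : 0 ≤ A) : (fun t => τ.real (Ioc (t - A) t)) =o[atTop] tail ν :=
    (isLittleO_comp_sub_sub (hlong A hA) hτ).congr_left fun t => tail_sub_tail (by linarith)
  have hφ := isLittleO_setIntegral_comp_sub (φ := fun s => tail σ s - a * tail ν s) (M := 1 + |a|)
    (tail_antitone.measurable.sub (tail_antitone.measurable.const_mul a)) (fun s => ?_) hσ hwin
    ((hI.isBigO.add (isBigO_refl _ _)).congr_left fun t => sub_add_cancel _ _)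
  · refine ((hφ.add (hI.const_mul_left a)).add hτ).congr_left fun t => ?_
    rw [tail_conv_eq_setIntegral_add hσ0, integral_sub (integrable_tail_comp_sub t).integrableOn
      ((integrable_tail_comp_sub t).const_mul a).integrableOn, integral_const_mul]
    ring
  · calc |tail σ s - a * tail ν s| ≤ |tail σ s| + |a| * |tail ν s| := by
          rw [← abs_mul]; exact abs_sub _ _
      _ ≤ 1 + |a| * 1 := by
          gcongr <;> rw [abs_of_nonneg (tail_nonneg s)] <;> exact tail_le_one s
      _ = 1 + |a| := by ring

theorem isLittleO_tail_conv (hν : ν (Iio 0) = 0) (hpos : ∀ t, 0 < tail ν t)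
    (h2 : (fun t => tail (ν ∗ ν) t - 2 * tail ν t) =o[atTop] tail ν)
    {σ τ : Measure ℝ} [IsProbabilityMeasure σ] [IsProbabilityMeasure τ] (hσ0 : σ (Iio 0) = 0)
    (hτ0 : τ (Iio 0) = 0) {a b : ℝ} (hσ : (fun t => tail σ t - a * tail ν t) =o[atTop] tail ν)
    (hτ : (fun t => tail τ t - b * tail ν t) =o[atTop] tail ν) :
    (fun t => tail (σ ∗ τ) t - (a + b) * tail ν t) =o[atTop] tail ν := by
  have hlong (A : ℝ) (hA : 0 ≤ A) := isLittleO_tail_sub_tail hν hpos h2 hA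
  have hν1 : (fun t => tail ν t - 1 * tail ν t) =o[atTop] tail ν :=
    (isLittleO_zero _ _).congr_left fun t => by ring
  have hτν := isLittleO_tail_conv_of_tail_self_conv hν hlong hτ0 hτ hν1
    (h2.congr_left fun t => by norm_num)
  rw [Measure.conv_comm, add_comm] at hτν
  exact isLittleO_tail_conv_of_tail_self_conv hν hlong hσ0 hσ hτ hτν

end TailEquivalence

lemma tail_map {Ω : Type*} [MeasurableSpace Ω] {μ : Measure Ω} {X : Ω → ℝ} (hX : Measurable X)
    (t : ℝ) : tail (μ.map X) t = (μ {ω | t < X ω}).toReal := by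
  rw [tail, measureReal_def, Measure.map_apply hX measurableSet_Ioi]
  rfl

lemma map_Iio_zero_of_nonneg {Ω : Type*} [MeasurableSpace Ω] {μ : Measure Ω} {X : Ω → ℝ}
    (hX : Measurable X) (hX0 : ∀ ω, 0 ≤ X ω) : μ.map X (Iio 0) = 0 := by
  rw [Measure.map_apply hX measurableSet_Iio, ← measure_empty (μ := μ)]
  congr 1
  exact eq_empty_of_forall_notMem fun ω hω => (hX0 ω).not_gt hω

namespace Subexponential

variable {ν : Measure ℝ} [IsProbabilityMeasure ν]

lemma tail_pos (h : Subexponential ν) (t₀ : ℝ) : 0 < tail ν t₀ := by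
  have h1 := subexponential_iff.1 h 1 le_rfl
  rw [convPow_one, Nat.cast_one] at h1
  obtain ⟨t, ht, ht₀⟩ := ((h1.eventually (lt_mem_nhds one_pos)).and (eventually_ge_atTop t₀)).exists
  have hne : tail ν t ≠ 0 := fun h0 => by simp [h0] at ht
  exact ((tail_nonneg t).lt_of_ne' hne).trans_le (tail_antitone ht₀)

lemma isLittleO_tail_conv_self (h : Subexponential ν) :
    (fun t => tail (ν ∗ ν) t - 2 * tail ν t) =o[atTop] tail ν := by
  rw [isLittleO_sub_mul_iff_tendsto_div fun t => (h.tail_pos t).ne']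
  simpa [convPow_succ 1, convPow_one] using subexponential_iff.1 h 2 one_le_two

lemma isLittleO_tail_convPow (h : Subexponential ν) (hν0 : ν (Iio 0) = 0) {σ : Measure ℝ}
    [IsProbabilityMeasure σ] (hσ0 : σ (Iio 0) = 0)
    (hσ : (fun t => tail σ t - 1 * tail ν t) =o[atTop] tail ν) (n : ℕ) :
    (fun t => tail (convPow σ n) t - n * tail ν t) =o[atTop] tail ν := by
  induction n with
  | zero =>
    refine (isLittleO_zero (tail ν) atTop).congr' ?_ .rfl
    filter_upwards [eventually_ge_atTop 0] with t ht
    simp [convPow_zero, tail, measureReal_def, ht.not_gt]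
  | succ n ih =>
    rw [convPow_succ, Nat.cast_succ, add_comm _ (1 : ℝ)]
    exact isLittleO_tail_conv hν0 h.tail_pos h.isLittleO_tail_conv_self hσ0
      (convPow_Iio_zero hσ0 n) hσ ih

lemma of_isLittleO_tail (h : Subexponential ν) (hν0 : ν (Iio 0) = 0) {σ : Measure ℝ}
    [IsProbabilityMeasure σ] (hσ0 : σ (Iio 0) = 0)
    (hσ : (fun t => tail σ t - 1 * tail ν t) =o[atTop] tail ν) : Subexponential σ :=
  subexponential_iff.2 fun n _ => by
    simpa using tendsto_div_of_isLittleO (fun t => (h.tail_pos t).ne') one_ne_zero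
      (h.isLittleO_tail_convPow hν0 hσ0 hσ n) hσ

end Subexponential

theorem subexponential_add_lighter_tail
    {Ω : Type*} [MeasurableSpace Ω] (μ : Measure Ω) [IsProbabilityMeasure μ]
    (X Y : Ω → ℝ) (hX : Measurable X) (hY : Measurable Y)
    (hX0 : ∀ ω, 0 ≤ X ω) (hY0 : ∀ ω, 0 ≤ Y ω)
    (hindep : IndepFun X Y μ)
    (hsub : Subexponential (μ.map X))
    (hlight : Tendsto (fun t => (μ {ω | t < Y ω}).toReal / (μ {ω | t < X ω}).toReal)
      atTop (nhds 0)) :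
    Subexponential (μ.map fun ω => X ω + Y ω) ∧
    Tendsto (fun t => (μ {ω | t < X ω + Y ω}).toReal / (μ {ω | t < X ω}).toReal)
      atTop (nhds 1) := by
  set ν := μ.map X
  set ρ := μ.map Y
  have : IsProbabilityMeasure ν := Measure.isProbabilityMeasure_map hX.aemeasurable
  have : IsProbabilityMeasure ρ := Measure.isProbabilityMeasure_map hY.aemeasurable
  have hν0 : ν (Iio 0) = 0 := map_Iio_zero_of_nonneg hX hX0
  have hρ0 : ρ (Iio 0) = 0 := map_Iio_zero_of_nonneg hY hY0
  have hne t : tail ν t ≠ 0 := (hsub.tail_pos t).ne'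
  have hρ : (fun t => tail ρ t - 0 * tail ν t) =o[atTop] tail ν := by
    rw [isLittleO_sub_mul_iff_tendsto_div hne]
    simpa [ν, ρ, tail_map hX, tail_map hY] using hlight
  have hν : (fun t => tail ν t - 1 * tail ν t) =o[atTop] tail ν :=
    (isLittleO_zero _ _).congr_left fun t => by ring
  have hsum : (fun t => tail (ν ∗ ρ) t - 1 * tail ν t) =o[atTop] tail ν := by
    simpa using isLittleO_tail_conv hν0 hsub.tail_pos hsub.isLittleO_tail_conv_self hν0 hρ0 hν hρ
  have hXY : μ.map (fun ω => X ω + Y ω) = ν ∗ ρ := hindep.map_add_eq_map_conv_map hX hY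
  refine ⟨hXY ▸ hsub.of_isLittleO_tail hν0 (conv_Iio_zero hν0 hρ0) hsum, ?_⟩
  simpa [← tail_map hX, ← tail_map (X := fun ω => X ω + Y ω) (by fun_prop), hXY] using
    tendsto_div_of_isLittleO hne one_ne_zero hsum hν
end

section
/- Let $X_1, X_2, \ldots$ be independent nonnegative random variables with distribution functions $F_i$ that are tail-equivalent: $\overline{F_i}(t) \sim a_i \overline{F_1}(t)$ with $a_i > 0$. Let $J$ be an independent $\mathbb{N}$-valued random variable and $Y = X_J$ with distribution function $F(t) = \sum_i \mathbb{P}(J=i) F_i(t)$. If the family $\{\overline{F_J}(t)/\overline{F_1}(t) : t \geq 0\}$ is uniformly integrable, then $\overline{F}(t) \sim (\mathbb{E}\, a_J)\, \overline{F_1}(t)$ as $t \to \infty$. -/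
open MeasureTheory Filter Topology

/-! The tail ratio of the mixture is `E[F̄_J(t) / F̄₁(t)]`, which tends to `E[a_J]` by Vitali's
convergence theorem: the integrands converge pointwise by tail equivalence and are uniformly
integrable by assumption. -/

namespace MeasureTheory

variable {α E : Type*} {m : MeasurableSpace α} {μ : Measure α} [NormedAddCommGroup E]

theorem UniformIntegrable.comp {ι κ : Type*} {p : ENNReal} {f : ι → α → E}
    (hf : UniformIntegrable f p μ) (u : κ → ι) : UniformIntegrable (fun k => f (u k)) p μ :=
  ⟨fun k => hf.1 (u k), fun _ hε => (hf.2.1 hε).imp fun _ ⟨hδ, h⟩ => ⟨hδ, fun k => h (u k)⟩,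
    hf.2.2.imp fun _ h k => h (u k)⟩

theorem UniformIntegrable.tendsto_integral_of_ae_tendsto [NormedSpace ℝ E] [IsFiniteMeasure μ]
    {ι : Type*} {l : Filter ι} [l.IsCountablyGenerated] {f : ι → α → E} {g : α → E}
    (hf : UniformIntegrable f 1 μ) (hfg : ∀ᵐ x ∂μ, Tendsto (fun i => f i x) l (𝓝 (g x))) :
    Tendsto (fun i => ∫ x, f i x ∂μ) l (𝓝 (∫ x, g x ∂μ)) := by
  refine tendsto_of_seq_tendsto fun u hu => ?_
  have hfu := hf.comp u
  have hfug : ∀ᵐ x ∂μ, Tendsto (fun n => f (u n) x) atTop (𝓝 (g x)) :=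
    hfg.mono fun x hx => hx.comp hu
  have hg : MemLp g 1 μ := hfu.memLp_of_ae_tendsto hfug
  exact tendsto_integral_of_L1' g hg.1 (.of_forall fun n => (hfu.memLp n).integrable le_rfl)
    (tendsto_Lp_finite_of_tendsto_ae le_rfl ENNReal.one_ne_top hfu.1 hg hfu.2.1 hfug)

theorem integral_comp_eq_tsum_of_countable [NormedSpace ℝ E] [CompleteSpace E] {ι : Type*}
    [Countable ι] [MeasurableSpace ι] [MeasurableSingletonClass ι] {J : α → ι} (hJ : Measurable J)
    {f : ι → E} (hf : Integrable (fun x => f (J x)) μ) :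
    ∫ x, f (J x) ∂μ = ∑' i, μ.real {x | J x = i} • f i := by
  have hfm : AEStronglyMeasurable f (μ.map J) := StronglyMeasurable.of_discrete.aestronglyMeasurable
  rw [← integral_map hJ.aemeasurable hfm,
    integral_countable ((integrable_map_measure hfm hJ.aemeasurable).2 hf)]
  simp_rw [map_measureReal_apply hJ (measurableSet_singleton _)]
  rfl

end MeasureTheory

theorem mixture_tail_equivalence_general
    {Ω : Type*} [MeasurableSpace Ω] (μ : Measure Ω) [IsProbabilityMeasure μ]
    -- Fbar i is the complementary distribution function of Xᵢ
    (Fbar : ℕ → ℝ → ℝ)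
    (a : ℕ → ℝ)
    -- tail equivalence: Fbar i (t) ∼ aᵢ Fbar 1 (t)
    (htaileq : ∀ i, Tendsto (fun t => Fbar i t / Fbar 1 t) atTop (nhds (a i)))
    (J : Ω → ℕ) (hJ : Measurable J)
    -- uniform integrability of the family {ω ↦ Fbar_{J ω}(t)/Fbar 1 (t) : t ≥ 0}
    (hui : UniformIntegrable (fun (t : ℝ) (ω : Ω) => Fbar (J ω) t / Fbar 1 t) 1 μ) :
    Tendsto (fun t => (∑' i : ℕ, (μ {ω | J ω = i}).toReal * Fbar i t) / Fbar 1 t)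
      atTop (nhds (∫ ω, a (J ω) ∂μ)) := by
  have hmix : ∀ t, ∫ ω, Fbar (J ω) t / Fbar 1 t ∂μ
      = (∑' i : ℕ, (μ {ω | J ω = i}).toReal * Fbar i t) / Fbar 1 t := fun t => by
    rw [integral_comp_eq_tsum_of_countable (f := fun i => Fbar i t / Fbar 1 t) hJ
      ((hui.memLp t).integrable le_rfl), ← tsum_div_const]
    simp only [measureReal_def, smul_eq_mul, mul_div_assoc]
  exact (hui.tendsto_integral_of_ae_tendsto (.of_forall fun ω => htaileq (J ω))).congr hmix

theorem mixture_tail_equivalence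
    {Ω : Type*} [MeasurableSpace Ω] (μ : Measure Ω) [IsProbabilityMeasure μ]
    -- Fbar i is the complementary distribution function of Xᵢ
    (Fbar : ℕ → ℝ → ℝ) (hF01 : ∀ i t, Fbar i t ∈ Set.Icc (0 : ℝ) 1)
    (hFpos : ∀ t, 0 < Fbar 1 t)
    (a : ℕ → ℝ) (ha : ∀ i, 0 < a i)
    -- tail equivalence: Fbar i (t) ∼ aᵢ Fbar 1 (t)
    (htaileq : ∀ i, Tendsto (fun t => Fbar i t / Fbar 1 t) atTop (nhds (a i)))
    (J : Ω → ℕ) (hJ : Measurable J)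
    -- uniform integrability of the family {ω ↦ Fbar_{J ω}(t)/Fbar 1 (t) : t ≥ 0}
    (hui : UniformIntegrable (fun (t : ℝ) (ω : Ω) => Fbar (J ω) t / Fbar 1 t) 1 μ) :
    Tendsto (fun t => (∑' i : ℕ, (μ {ω | J ω = i}).toReal * Fbar i t) / Fbar 1 t)
      atTop (nhds (∫ ω, a (J ω) ∂μ)) :=
  mixture_tail_equivalence_general μ Fbar a htaileq J hJ hui
end

section
/- Let $X$ be a recurrent birth and death process on $\mathbb{Z}^+$ with birth rates $b_i$ equal to death rates $d_i = b_i$ at each state $i \geq 1$, and suppose the rates $b_i$ are nonincreasing in $i$. Let $\tau_0^{(1)}$ be the hitting time of $0$ from state $1$, with distribution function $F$. Then $\limsup_{t\to\infty} \overline{F^{*2}}(t)/\overline{F}(t) \leq 2$, and hence $\tau_0^{(1)}$ is subexponential. -/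
/-!
On tails, `ν₁ ∗ ν₁ ≤ σ ∗ ν₁ = ν₂ ≤ νE ∗ ν₂ ≤ 2 ν₁` (by the domination, the strong Markov
identity, `νE` living on `[0, ∞)`, and the first-jump decomposition), so
`P(X₁ + X₂ > t) ≤ 2 P(X > t)` for every `t`.

For a law on `[0, ∞)` with positive tail `F̄` this pointwise bound says
`∫_{[0,t]} F̄(t - y) dF(y) ≤ F̄(t)`; restricting the integral to `y ≤ A` and to `A < y ≤ t` gives
`F̄(t - A) (F̄(A) - F̄(t)) ≤ F̄(t) F̄(A)`, hence `F̄(t - A) / F̄(t) → 1`. Writing the tail of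
`X₁ + ⋯ + Xₙ₊₁` as `∫ F̄^{*n}(t - y) dF(y)` and splitting at `y = t - A`, where `A` is so large
that `F̄^{*n} ≤ (n + ε) F̄` beyond `A`, bounds the ratio above by `n + ε + F̄(t - A)/F̄(t)`; the
bound `F̄^{*(n+1)}(t) ≥ F̄(t) + F̄^{*n}(t) F(t)` bounds it below, and induction on `n` gives
`F̄^{*n}(t)/F̄(t) → n`.
-/

open MeasureTheory Filter

open Set
open scoped ENNReal Topology

section Convolution

variable {μ μ' ρ : Measure ℝ}

theorem measure_Ioi_conv [SFinite μ] [SFinite ρ] (t : ℝ) :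
    (μ ∗ ρ) (Ioi t) = ∫⁻ y, ρ (Ioi (t - y)) ∂μ := by
  rw [Measure.conv, Measure.map_apply measurable_add measurableSet_Ioi,
    Measure.prod_apply (measurable_add measurableSet_Ioi)]
  refine lintegral_congr fun y => congrArg ρ ?_
  ext z
  simp [sub_lt_iff_lt_add']

theorem measure_Ioi_conv_mono_left [SFinite μ] [SFinite μ'] [SFinite ρ]
    (h : ∀ t, μ (Ioi t) ≤ μ' (Ioi t)) (t : ℝ) : (μ ∗ ρ) (Ioi t) ≤ (μ' ∗ ρ) (Ioi t) := by
  rw [Measure.conv_comm μ, Measure.conv_comm μ', measure_Ioi_conv, measure_Ioi_conv]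
  exact lintegral_mono fun y => h (t - y)

theorem measure_Ioi_eq_one_of_neg [IsProbabilityMeasure ρ] (hρ : ρ (Iio 0) = 0) {s : ℝ}
    (hs : s < 0) : ρ (Ioi s) = 1 := by
  rw [← compl_Iic, prob_compl_eq_one_iff measurableSet_Iic]
  exact measure_mono_null (Iic_subset_Iio.2 hs) hρ

theorem conv_Iio_zero_s18 [SFinite μ] [SFinite ρ] (hμ : μ (Iio 0) = 0) (hρ : ρ (Iio 0) = 0) :
    (μ ∗ ρ) (Iio 0) = 0 := by
  rw [Measure.conv, Measure.map_apply measurable_add measurableSet_Iio]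
  refine measure_mono_null (t := Iio 0 ×ˢ univ ∪ univ ×ˢ Iio 0) ?_ ?_
  · intro p hp
    by_contra! h
    simp only [mem_union, mem_prod, mem_Iio, mem_univ, and_true, true_and, not_or, not_lt] at h
    exact (add_nonneg h.1 h.2).not_gt hp
  · simp [Measure.prod_prod, hμ, hρ]

theorem ae_nonneg_of_measure_Iio (hμ : μ (Iio 0) = 0) : ∀ᵐ y ∂μ, 0 ≤ y :=
  ae_iff.2 (by simp only [not_le]; exact hμ)

theorem measure_Ioi_le_measure_Ioi_conv [IsProbabilityMeasure μ] [SFinite ρ]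
    (hμ : μ (Iio 0) = 0) (t : ℝ) : ρ (Ioi t) ≤ (μ ∗ ρ) (Ioi t) := by
  rw [measure_Ioi_conv]
  calc ρ (Ioi t) = ∫⁻ _, ρ (Ioi t) ∂μ := by simp
    _ ≤ ∫⁻ y, ρ (Ioi (t - y)) ∂μ :=
      lintegral_mono_ae <| (ae_nonneg_of_measure_Iio hμ).mono fun y hy =>
        measure_mono (Ioi_subset_Ioi (by linarith))

theorem setLIntegral_Ioi_measure_Ioi_sub [IsProbabilityMeasure ρ] (hρ : ρ (Iio 0) = 0)
    (t : ℝ) : ∫⁻ y in Ioi t, ρ (Ioi (t - y)) ∂μ = μ (Ioi t) := by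
  rw [setLIntegral_congr_fun measurableSet_Ioi fun y hy =>
    measure_Ioi_eq_one_of_neg hρ (sub_neg.2 hy), setLIntegral_one]

theorem measure_Ioi_add_le_measure_Ioi_conv [IsProbabilityMeasure μ] [IsProbabilityMeasure ρ]
    (hμ : μ (Iio 0) = 0) (hρ : ρ (Iio 0) = 0) (t : ℝ) :
    μ (Ioi t) + ρ (Ioi t) * μ (Iic t) ≤ (μ ∗ ρ) (Ioi t) := by
  rw [measure_Ioi_conv, ← lintegral_add_compl _ measurableSet_Iic, compl_Iic,
    setLIntegral_Ioi_measure_Ioi_sub hρ, add_comm, ← setLIntegral_const]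
  refine add_le_add (lintegral_mono_ae ?_) le_rfl
  exact (ae_restrict_of_ae (ae_nonneg_of_measure_Iio hμ)).mono fun y hy =>
    measure_mono (Ioi_subset_Ioi (by linarith))

end Convolution

section SumLaw

noncomputable def sumLaw (ν : Measure ℝ) (n : ℕ) : Measure ℝ :=
  (Measure.pi fun _ : Fin n => ν).map fun x => ∑ i, x i

theorem measurable_sum_coord (n : ℕ) : Measurable fun x : Fin n → ℝ => ∑ i, x i :=
  Finset.measurable_sum _ fun i _ => measurable_pi_apply i

theorem convTail_eq_measureReal_sumLaw (ν : Measure ℝ) (n : ℕ) (t : ℝ) :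
    convTail ν n t = (sumLaw ν n).real (Ioi t) := by
  rw [Measure.real, sumLaw, Measure.map_apply (measurable_sum_coord n) measurableSet_Ioi]
  rfl

theorem sumLaw_one (ν : Measure ℝ) : sumLaw ν 1 = ν := by
  conv_rhs => rw [← (measurePreserving_funUnique ν (Fin 1)).map_eq]
  rw [sumLaw]
  congr 1
  ext x
  simp [MeasurableEquiv.funUnique]

variable {ν : Measure ℝ} [IsProbabilityMeasure ν]

instance (n : ℕ) : IsProbabilityMeasure (sumLaw ν n) :=
  Measure.isProbabilityMeasure_map (measurable_sum_coord n).aemeasurable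

theorem sumLaw_succ (n : ℕ) : sumLaw ν (n + 1) = ν ∗ sumLaw ν n := by
  have hsum := measurable_sum_coord n
  have hsplit := (measurePreserving_piFinSuccAbove (fun _ : Fin (n + 1) => ν) 0).map_eq
  calc sumLaw ν (n + 1)
      = ((ν.prod (Measure.pi fun _ : Fin n => ν)).map
          (Prod.map id fun x => ∑ i, x i)).map fun p => p.1 + p.2 := by
        rw [Measure.map_map measurable_add (measurable_id.prodMap hsum), ← hsplit,
          Measure.map_map (by fun_prop) (MeasurableEquiv.measurable _), sumLaw]
        congr 1
        ext x
        simp [Fin.sum_univ_succAbove x 0, Fin.tail]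
    _ = ν ∗ sumLaw ν n := by
        rw [← Measure.map_prod_map _ _ measurable_id hsum, Measure.map_id]
        rfl

theorem sumLaw_Iio_zero (hν : ν (Iio 0) = 0) (n : ℕ) : sumLaw ν n (Iio 0) = 0 := by
  induction n with
  | zero => simp [sumLaw, Measure.map_const]
  | succ n ih => rw [sumLaw_succ]; exact conv_Iio_zero_s18 hν ih

end SumLaw

theorem measureReal_pos {α : Type*} [MeasurableSpace α] {μ : Measure α} [IsFiniteMeasure μ]
    {s : Set α} (h : 0 < μ s) : 0 < μ.real s :=
  ENNReal.toReal_pos h.ne' (measure_ne_top _ _)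

theorem tendsto_measureReal_Ioi_atTop (ν : Measure ℝ) [IsProbabilityMeasure ν] :
    Tendsto (fun t => ν.real (Ioi t)) atTop (𝓝 0) := by
  have hIic : Tendsto (fun t => ν.real (Iic t)) atTop (𝓝 1) := by
    have h := tendsto_measure_Iic_atTop ν
    rw [measure_univ] at h
    exact (ENNReal.tendsto_toReal ENNReal.one_ne_top).comp h
  have h := (tendsto_const_nhds (x := (1 : ℝ))).sub hIic
  rw [sub_self] at h
  refine h.congr fun t => ?_
  rw [← compl_Iic, probReal_compl_eq_one_sub measurableSet_Iic]

section LongTail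

variable {ν : Measure ℝ} [IsProbabilityMeasure ν]

theorem setLIntegral_Iic_measure_Ioi_sub_le (hν : ν (Iio 0) = 0)
    (htail : ∀ t, (ν ∗ ν) (Ioi t) ≤ 2 * ν (Ioi t)) (t : ℝ) :
    ∫⁻ y in Iic t, ν (Ioi (t - y)) ∂ν ≤ ν (Ioi t) := by
  have h := htail t
  rw [measure_Ioi_conv, ← lintegral_add_compl _ measurableSet_Iic, compl_Iic,
    setLIntegral_Ioi_measure_Ioi_sub hν, two_mul] at h
  exact (ENNReal.add_le_add_iff_right (measure_ne_top _ _)).1 h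

theorem measure_Ioi_sub_mul_measure_Ioc_le (hν : ν (Iio 0) = 0)
    (htail : ∀ t, (ν ∗ ν) (Ioi t) ≤ 2 * ν (Ioi t)) {A t : ℝ} (hAt : A ≤ t) :
    ν (Ioi (t - A)) * ν (Ioc A t) ≤ ν (Ioi t) * ν (Ioi A) := by
  have hIic : ν (Ioi t) * ν (Iic A) ≤ ∫⁻ y in Iic A, ν (Ioi (t - y)) ∂ν := by
    rw [← setLIntegral_const]
    exact lintegral_mono_ae <| (ae_restrict_of_ae (ae_nonneg_of_measure_Iio hν)).mono
      fun y hy => measure_mono (Ioi_subset_Ioi (by linarith))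
  have hIoc : ν (Ioi (t - A)) * ν (Ioc A t) ≤ ∫⁻ y in Ioc A t, ν (Ioi (t - y)) ∂ν := by
    rw [← setLIntegral_const]
    exact setLIntegral_mono' measurableSet_Ioc fun y hy =>
      measure_mono (Ioi_subset_Ioi (by linarith [hy.1]))
  have hsum : ν (Ioi t) * ν (Iic A) + ν (Ioi (t - A)) * ν (Ioc A t)
      ≤ ν (Ioi t) * ν (Iic A) + ν (Ioi t) * ν (Ioi A) := by
    calc ν (Ioi t) * ν (Iic A) + ν (Ioi (t - A)) * ν (Ioc A t)
        ≤ ∫⁻ y in Iic A ∪ Ioc A t, ν (Ioi (t - y)) ∂ν := by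
          rw [lintegral_union measurableSet_Ioc (Iic_disjoint_Ioc le_rfl)]
          exact add_le_add hIic hIoc
      _ ≤ ν (Ioi t) := by
          rw [Iic_union_Ioc_eq_Iic hAt]
          exact setLIntegral_Iic_measure_Ioi_sub_le hν htail t
      _ = ν (Ioi t) * ν (Iic A) + ν (Ioi t) * ν (Ioi A) := by
          rw [← mul_add, ← compl_Iic (a := A), prob_add_prob_compl measurableSet_Iic, mul_one]
  exact (ENNReal.add_le_add_iff_left (ENNReal.mul_ne_top (measure_ne_top _ _)
    (measure_ne_top _ _))).1 hsum

theorem tendsto_measureReal_Ioi_sub_div (hν : ν (Iio 0) = 0)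
    (htail : ∀ t, (ν ∗ ν) (Ioi t) ≤ 2 * ν (Ioi t)) (hpos : ∀ t, 0 < ν (Ioi t)) {A : ℝ}
    (hA : 0 ≤ A) :
    Tendsto (fun t => ν.real (Ioi (t - A)) / ν.real (Ioi t)) atTop (𝓝 1) := by
  have hTpos : ∀ t, 0 < ν.real (Ioi t) := fun t => measureReal_pos (hpos t)
  have hineq : ∀ t, A ≤ t →
      ν.real (Ioi (t - A)) * (ν.real (Ioi A) - ν.real (Ioi t))
        ≤ ν.real (Ioi t) * ν.real (Ioi A) := by
    intro t hAt
    have h := ENNReal.toReal_mono (ENNReal.mul_ne_top (measure_ne_top _ _) (measure_ne_top _ _))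
      (measure_Ioi_sub_mul_measure_Ioc_le hν htail hAt)
    have hIoc : ν.real (Ioc A t) = ν.real (Ioi A) - ν.real (Ioi t) := by
      rw [← Ioc_union_Ioi_eq_Ioi hAt, measureReal_union (Ioc_disjoint_Ioi le_rfl) measurableSet_Ioi]
      ring
    rw [ENNReal.toReal_mul, ENNReal.toReal_mul] at h
    rwa [← hIoc]
  have hT0 := tendsto_measureReal_Ioi_atTop ν
  have hupper :
      Tendsto (fun t => ν.real (Ioi A) / (ν.real (Ioi A) - ν.real (Ioi t))) atTop (𝓝 1) := by
    have h := (tendsto_const_nhds (x := ν.real (Ioi A))).div (tendsto_const_nhds.sub hT0)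
      (by rw [sub_zero]; exact (hTpos A).ne')
    rwa [sub_zero, div_self (hTpos A).ne'] at h
  refine tendsto_of_tendsto_of_tendsto_of_le_of_le' tendsto_const_nhds hupper
    (Eventually.of_forall fun t => (one_le_div (hTpos t)).2 ?_) ?_
  · exact measureReal_mono (Ioi_subset_Ioi (by linarith))
  · filter_upwards [hT0.eventually_lt_const (hTpos A), eventually_ge_atTop A] with t hlt hAt
    rw [div_le_div_iff₀ (hTpos t) (sub_pos.2 hlt)]
    linarith [hineq t hAt]

end LongTail

section Subexponential

variable {ν : Measure ℝ} [IsProbabilityMeasure ν]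

theorem one_add_mul_le_measureReal_Ioi_sumLaw_succ_div (hν : ν (Iio 0) = 0)
    (hpos : ∀ t, 0 < ν (Ioi t)) (n : ℕ) (t : ℝ) :
    1 + (sumLaw ν n).real (Ioi t) / ν.real (Ioi t) * (1 - ν.real (Ioi t))
      ≤ (sumLaw ν (n + 1)).real (Ioi t) / ν.real (Ioi t) := by
  have h := ENNReal.toReal_mono (by finiteness)
    (measure_Ioi_add_le_measure_Ioi_conv hν (sumLaw_Iio_zero hν n) t)
  rw [← sumLaw_succ, ENNReal.toReal_add (by finiteness) (by finiteness), ENNReal.toReal_mul] at h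
  have hIic : ν.real (Iic t) = 1 - ν.real (Ioi t) := by
    rw [← compl_Ioi, probReal_compl_eq_one_sub measurableSet_Ioi]
  have hT := measureReal_pos (hpos t)
  rw [le_div_iff₀ hT]
  calc (1 + (sumLaw ν n).real (Ioi t) / ν.real (Ioi t) * (1 - ν.real (Ioi t))) * ν.real (Ioi t)
      = ν.real (Ioi t) + (sumLaw ν n).real (Ioi t) * ν.real (Iic t) := by
        rw [hIic]; field_simp
    _ ≤ (sumLaw ν (n + 1)).real (Ioi t) := h

theorem measure_Ioi_sumLaw_succ_le (hν : ν (Iio 0) = 0)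
    (htail : ∀ t, (ν ∗ ν) (Ioi t) ≤ 2 * ν (Ioi t)) {n : ℕ} {A : ℝ} (hA : 0 ≤ A) {c : ℝ≥0∞}
    (hc : ∀ s, A ≤ s → sumLaw ν n (Ioi s) ≤ c * ν (Ioi s)) (t : ℝ) :
    sumLaw ν (n + 1) (Ioi t) ≤ c * ν (Ioi t) + ν (Ioi (t - A)) := by
  rw [sumLaw_succ, measure_Ioi_conv, ← lintegral_add_compl _ (measurableSet_Iic (a := t - A)),
    compl_Iic]
  refine add_le_add ?_ ?_
  · have hmono : Monotone fun y => ν (Ioi (t - y)) := fun y z hyz =>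
      measure_mono (Ioi_subset_Ioi (by linarith))
    calc ∫⁻ y in Iic (t - A), sumLaw ν n (Ioi (t - y)) ∂ν
        ≤ ∫⁻ y in Iic (t - A), c * ν (Ioi (t - y)) ∂ν :=
          setLIntegral_mono' measurableSet_Iic fun y hy => hc _ (by linarith [mem_Iic.1 hy])
      _ ≤ c * ∫⁻ y in Iic t, ν (Ioi (t - y)) ∂ν := by
          rw [lintegral_const_mul c hmono.measurable]
          exact mul_le_mul_right (lintegral_mono_set (Iic_subset_Iic.2 (by linarith))) _
      _ ≤ c * ν (Ioi t) := mul_le_mul_right (setLIntegral_Iic_measure_Ioi_sub_le hν htail t) _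
  · calc ∫⁻ y in Ioi (t - A), sumLaw ν n (Ioi (t - y)) ∂ν ≤ ∫⁻ _ in Ioi (t - A), 1 ∂ν :=
          setLIntegral_mono' measurableSet_Ioi fun y _ => prob_le_one
      _ = ν (Ioi (t - A)) := setLIntegral_one _

theorem measureReal_Ioi_sumLaw_succ_div_le (hν : ν (Iio 0) = 0)
    (htail : ∀ t, (ν ∗ ν) (Ioi t) ≤ 2 * ν (Ioi t)) (hpos : ∀ t, 0 < ν (Ioi t)) {n : ℕ} {A c : ℝ}
    (hA : 0 ≤ A) (hc0 : 0 ≤ c) (hc : ∀ s, A ≤ s → (sumLaw ν n).real (Ioi s) ≤ c * ν.real (Ioi s))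
    (t : ℝ) :
    (sumLaw ν (n + 1)).real (Ioi t) / ν.real (Ioi t)
      ≤ c + ν.real (Ioi (t - A)) / ν.real (Ioi t) := by
  have hc' : ∀ s, A ≤ s → sumLaw ν n (Ioi s) ≤ ENNReal.ofReal c * ν (Ioi s) := fun s hs => by
    rw [← ofReal_measureReal, ← ofReal_measureReal (μ := ν), ← ENNReal.ofReal_mul hc0]
    exact ENNReal.ofReal_le_ofReal (hc s hs)
  have h := ENNReal.toReal_mono (by finiteness) (measure_Ioi_sumLaw_succ_le hν htail hA hc' t)
  rw [ENNReal.toReal_add (by finiteness) (by finiteness), ENNReal.toReal_mul,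
    ENNReal.toReal_ofReal hc0] at h
  calc (sumLaw ν (n + 1)).real (Ioi t) / ν.real (Ioi t)
      ≤ (c * ν.real (Ioi t) + ν.real (Ioi (t - A))) / ν.real (Ioi t) := by gcongr; exact h
    _ = c + ν.real (Ioi (t - A)) / ν.real (Ioi t) := by
        field_simp [(measureReal_pos (hpos t)).ne']

theorem tendsto_measureReal_Ioi_sumLaw_succ_div (hν : ν (Iio 0) = 0)
    (htail : ∀ t, (ν ∗ ν) (Ioi t) ≤ 2 * ν (Ioi t)) (hpos : ∀ t, 0 < ν (Ioi t)) {n : ℕ}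
    (hn : Tendsto (fun t => (sumLaw ν n).real (Ioi t) / ν.real (Ioi t)) atTop (𝓝 n)) :
    Tendsto (fun t => (sumLaw ν (n + 1)).real (Ioi t) / ν.real (Ioi t)) atTop
      (𝓝 (n + 1 : ℕ)) := by
  refine tendsto_order.2 ⟨fun b hb => ?_, fun b hb => ?_⟩
  · have hlower : Tendsto (fun t => 1 + (sumLaw ν n).real (Ioi t) / ν.real (Ioi t) *
        (1 - ν.real (Ioi t))) atTop (𝓝 (1 + n * (1 - 0))) :=
      tendsto_const_nhds.add (hn.mul (tendsto_const_nhds.sub (tendsto_measureReal_Ioi_atTop ν)))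
    rw [sub_zero, mul_one, add_comm, ← Nat.cast_succ] at hlower
    exact (hlower.eventually (lt_mem_nhds hb)).mono fun t ht =>
      ht.trans_le (one_add_mul_le_measureReal_Ioi_sumLaw_succ_div hν hpos n t)
  · push_cast at hb
    obtain ⟨c, hnc, hcb⟩ : ∃ c : ℝ, n < c ∧ c + 1 < b := ⟨(n + b - 1) / 2, by linarith, by linarith⟩
    obtain ⟨A, hA⟩ := eventually_atTop.1 (hn.eventually (gt_mem_nhds hnc))
    have hc : ∀ s, max A 0 ≤ s → (sumLaw ν n).real (Ioi s) ≤ c * ν.real (Ioi s) := fun s hs =>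
      ((div_lt_iff₀ (measureReal_pos (hpos s))).1 (hA s (le_of_max_le_left hs))).le
    have hupper : Tendsto (fun t => c + ν.real (Ioi (t - max A 0)) / ν.real (Ioi t)) atTop
        (𝓝 (c + 1)) :=
      tendsto_const_nhds.add (tendsto_measureReal_Ioi_sub_div hν htail hpos (le_max_right _ _))
    exact (hupper.eventually (gt_mem_nhds hcb)).mono fun t ht =>
      (measureReal_Ioi_sumLaw_succ_div_le hν htail hpos (le_max_right _ _)
        (n.cast_nonneg.trans hnc.le) hc t).trans_lt ht

theorem subexponential_of_measure_Ioi_conv_self_le (hν : ν (Iio 0) = 0)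
    (htail : ∀ t, (ν ∗ ν) (Ioi t) ≤ 2 * ν (Ioi t)) (hpos : ∀ t, 0 < ν (Ioi t)) :
    Subexponential ν := by
  intro n hn
  simp_rw [convTail_eq_measureReal_sumLaw]
  induction n, hn using Nat.le_induction with
  | base =>
    simp_rw [sumLaw_one, Nat.cast_one]
    exact tendsto_const_nhds.congr fun t => (div_self (measureReal_pos (hpos t)).ne').symm
  | succ n _ ih => exact tendsto_measureReal_Ioi_sumLaw_succ_div hν htail hpos ih

end Subexponential

theorem measure_Ioi_conv_self_le_two_mul {νE ν1 ν2 σ : Measure ℝ} [IsProbabilityMeasure νE]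
    [SFinite ν1] [SFinite ν2] [SFinite σ] (hνE : νE (Iio 0) = 0)
    (h1 : ν1 = (2 : ℝ≥0∞)⁻¹ • νE + (2 : ℝ≥0∞)⁻¹ • (νE ∗ ν2)) (h2 : ν2 = σ ∗ ν1)
    (hdom : ∀ t, ν1 (Ioi t) ≤ σ (Ioi t)) (t : ℝ) :
    (ν1 ∗ ν1) (Ioi t) ≤ 2 * ν1 (Ioi t) :=
  calc (ν1 ∗ ν1) (Ioi t) ≤ (σ ∗ ν1) (Ioi t) := measure_Ioi_conv_mono_left hdom t
    _ = ν2 (Ioi t) := by rw [h2]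
    _ ≤ (νE ∗ ν2) (Ioi t) := measure_Ioi_le_measure_Ioi_conv hνE t
    _ ≤ 2 * ν1 (Ioi t) := by
      rw [h1, Measure.add_apply, Measure.smul_apply, Measure.smul_apply, smul_eq_mul, smul_eq_mul,
        mul_add, ← mul_assoc, ← mul_assoc, ENNReal.mul_inv_cancel two_ne_zero ENNReal.ofNat_ne_top,
        one_mul, one_mul]
      exact le_add_self

/-- `ν₁, ν₂` are the laws of `τ₀⁽¹⁾, τ₀⁽²⁾`, `νE` the Exp(2b₁) law of the holding time at `1`
and `σ` the law of `τ₁⁽²⁾`; `h1` is the first-jump decomposition, `h2` the strong Markov property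
at the hitting time of `1`, and `hdom` the stochastic domination that follows from the rates being
nonincreasing. -/
theorem decreasing_rates_birth_death_subexponential_general
    (b1 : ℝ)
    (νE ν1 ν2 σ : Measure ℝ)
    [IsProbabilityMeasure νE] [IsProbabilityMeasure ν1]
    [IsProbabilityMeasure ν2] [IsProbabilityMeasure σ]
    (hE : ∀ t : ℝ, 0 ≤ t → νE (Set.Ioi t) = ENNReal.ofReal (Real.exp (-(2 * b1) * t)))
    (hnn : ν1 (Set.Iio 0) = 0)
    (h1 : ν1 = (2 : ENNReal)⁻¹ • νE + (2 : ENNReal)⁻¹ • (Measure.conv νE ν2))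
    (h2 : ν2 = Measure.conv σ ν1)
    (hdom : ∀ t : ℝ, ν1 (Set.Ioi t) ≤ σ (Set.Ioi t)) :
    Filter.limsup (fun t => convTail ν1 2 t / (ν1 (Set.Ioi t)).toReal) atTop ≤ 2 ∧
    Subexponential ν1 := by
  have hνE : νE (Iio 0) = 0 := by
    have h := hE 0 le_rfl
    rw [mul_zero, Real.exp_zero, ENNReal.ofReal_one, ← compl_Iic,
      prob_compl_eq_one_iff measurableSet_Iic] at h
    exact measure_mono_null Iio_subset_Iic_self h
  have hpos : ∀ t, 0 < ν1 (Ioi t) := fun t =>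
    calc 0 < (2 : ℝ≥0∞)⁻¹ * νE (Ioi (max t 0)) := by
          rw [hE _ (le_max_right t 0)]
          simp [Real.exp_pos]
      _ ≤ ν1 (Ioi (max t 0)) := by
          rw [h1, Measure.add_apply, Measure.smul_apply, smul_eq_mul]
          exact le_self_add
      _ ≤ ν1 (Ioi t) := measure_mono (Ioi_subset_Ioi (le_max_left t 0))
  have hsub := subexponential_of_measure_Ioi_conv_self_le hnn
    (measure_Ioi_conv_self_le_two_mul hνE h1 h2 hdom) hpos
  exact ⟨(hsub 2 one_le_two).limsup_eq.le.trans (by norm_num), hsub⟩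

/-- For a recurrent birth and death process on `ℤ⁺` with birth rates equal to death
rates and nonincreasing in the state, the hitting time `τ₀⁽¹⁾` of `0` from `1` is
subexponential.  Here `ν₁, ν₂` are the laws of `τ₀⁽¹⁾, τ₀⁽²⁾`, `νE` is the Exp(2b₁) law
of the holding time at `1`, and `σ` is the law of `τ₁⁽²⁾`; the hypotheses are the
first-jump decomposition `ν₁ = ½ νE + ½ (νE ∗ ν₂)`, the strong Markov identity
`ν₂ = σ ∗ ν₁`, and the stochastic domination of `τ₀⁽¹⁾` by `τ₁⁽²⁾` (which follows from
the rates being nonincreasing). -/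
theorem decreasing_rates_birth_death_subexponential
    (b1 : ℝ) (hb1 : 0 < b1)
    (νE ν1 ν2 σ : Measure ℝ)
    [IsProbabilityMeasure νE] [IsProbabilityMeasure ν1]
    [IsProbabilityMeasure ν2] [IsProbabilityMeasure σ]
    (hE : ∀ t : ℝ, 0 ≤ t → νE (Set.Ioi t) = ENNReal.ofReal (Real.exp (-(2 * b1) * t)))
    (hnn : ν1 (Set.Iio 0) = 0)
    (h1 : ν1 = (2 : ENNReal)⁻¹ • νE + (2 : ENNReal)⁻¹ • (Measure.conv νE ν2))
    (h2 : ν2 = Measure.conv σ ν1)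
    (hdom : ∀ t : ℝ, ν1 (Set.Ioi t) ≤ σ (Set.Ioi t)) :
    Filter.limsup (fun t => convTail ν1 2 t / (ν1 (Set.Ioi t)).toReal) atTop ≤ 2 ∧
    Subexponential ν1 :=
  decreasing_rates_birth_death_subexponential_general b1 νE ν1 ν2 σ hE hnn h1 h2 hdom
end
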